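/- arXiv:2012.10955 — 3 statements merged into one kernel-verified Lean document; each statement's English description precedes it below -/
import Mathlib

section
/- Borel Lemma: Let T be a strictly positive nondecreasing function of class C^1 on (0,∞), let γ > 0 be a number such that T(γ) ≥ e, and let φ be a strictly positive nondecreasing function on [e,∞) such that c_φ := ∫_e^∞ dt/(t·φ(t)) < ∞. Then the inequality T'(r) ≤ T(r)·φ(T(r)) holds for all r ≥ γ outside a set of Lebesgue measure not exceeding c_φ. -/
open MeasureTheory Set Filter Topology

/-!
Put `Φ u = ∫_e^u dt / (t φ t)` and `F = Φ ∘ T`. Since `1 / (t φ t)` is decreasing, comparing left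
difference quotients gives `F' r ≥ T' r / (T r φ (T r)) > 1` at every point `r > γ` of the
exceptional set where `F` is differentiable; no continuity of `φ` is needed. Being monotone, `F`
is differentiable almost everywhere and `∫ F' ≤ F(∞) - F(γ) ≤ c_φ`, which bounds the measure of
the exceptional set.
-/

namespace Monotone

variable {F : ℝ → ℝ} {s : Set ℝ} {a b M : ℝ}

theorem volume_le_of_one_le_deriv (hF : Monotone F) (hs : s ⊆ Ioc a b)
    (h : ∀ x ∈ s, DifferentiableAt ℝ F x → 1 ≤ deriv F x) :
    volume s ≤ ENNReal.ofReal (F b - F a) := by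
  rcases lt_or_ge b a with hba | hab
  · simp [subset_empty_iff.1 (hs.trans (Ioc_eq_empty_of_le hba.le).le)]
  set S := {x ∈ Ioc a b | 1 ≤ deriv F x}
  have hsS : s ≤ᵐ[volume] S := by
    filter_upwards [hF.ae_differentiableAt] with x hx hxs
    exact ⟨hs hxs, h x hxs hx⟩
  have hint : IntegrableOn (deriv F) (Ioc a b) :=
    (intervalIntegrable_iff_integrableOn_Ioc_of_le hab).1
      (hF.monotoneOn _).intervalIntegrable_deriv
  calc volume s ≤ volume S := measure_mono_ae hsS
    _ = ∫⁻ _ in S, 1 := (setLIntegral_one S).symm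
    _ ≤ ∫⁻ x in S, ENNReal.ofReal (deriv F x) :=
        setLIntegral_mono (measurable_deriv F).ennreal_ofReal
          fun x hx => ENNReal.one_le_ofReal.2 hx.2
    _ ≤ ∫⁻ x in Ioc a b, ENNReal.ofReal (deriv F x) := lintegral_mono_set (sep_subset _ _)
    _ = ENNReal.ofReal (∫ x in a..b, deriv F x) := by
        rw [intervalIntegral.integral_of_le hab, ofReal_integral_eq_lintegral_ofReal hint
          (Eventually.of_forall fun _ => hF.deriv_nonneg)]
    _ ≤ ENNReal.ofReal (F b - F a) :=
        ENNReal.ofReal_le_ofReal ((uIcc_of_le (sub_nonneg.2 (hF hab)) ▸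
          (hF.monotoneOn (uIcc a b)).intervalIntegral_deriv_mem_uIcc).2)

theorem volume_le_of_one_le_deriv_of_le (hF : Monotone F) (hs : s ⊆ Ioi a)
    (hM : ∀ x, F x ≤ M) (h : ∀ x ∈ s, DifferentiableAt ℝ F x → 1 ≤ deriv F x) :
    volume s ≤ ENNReal.ofReal (M - F a) := by
  have hunion : s = ⋃ b : ℝ, s ∩ Ioc a b := by
    ext x
    simp only [mem_iUnion, mem_inter_iff, mem_Ioc]
    exact ⟨fun hx => ⟨x, hx, hs hx, le_rfl⟩, fun ⟨_, hx, _⟩ => hx⟩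
  rw [hunion, Monotone.measure_iUnion fun b b' hbb' => inter_subset_inter_right _
    (Ioc_subset_Ioc_right hbb')]
  refine iSup_le fun b => ?_
  calc volume (s ∩ Ioc a b) ≤ ENNReal.ofReal (F b - F a) :=
        hF.volume_le_of_one_le_deriv inter_subset_right fun x hx => h x hx.1
    _ ≤ ENNReal.ofReal (M - F a) := ENNReal.ofReal_le_ofReal (by linarith [hM b])

end Monotone

theorem mul_deriv_le_deriv_of_eventually_le {F T : ℝ → ℝ} {r k : ℝ}
    (hF : DifferentiableAt ℝ F r) (hT : DifferentiableAt ℝ T r)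
    (h : ∀ᶠ s in 𝓝[<] r, k * (T r - T s) ≤ F r - F s) :
    k * deriv T r ≤ deriv F r := by
  have hF' := (hasDerivAt_iff_tendsto_slope_left_right.1 hF.hasDerivAt).1
  have hT' := (hasDerivAt_iff_tendsto_slope_left_right.1 hT.hasDerivAt).1
  refine le_of_tendsto_of_tendsto (hT'.const_mul k) hF' ?_
  filter_upwards [h, self_mem_nhdsWithin] with s hs hsr
  calc k * slope T r s = k * (T r - T s) / (r - s) := by
        rw [slope_def_field, ← neg_div_neg_eq, neg_sub, neg_sub, mul_div_assoc]
    _ ≤ (F r - F s) / (r - s) := div_le_div_of_nonneg_right hs (sub_nonneg.2 (le_of_lt hsr))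
    _ = slope F r s := by rw [slope_def_field, ← neg_div_neg_eq, neg_sub, neg_sub]

theorem antitoneOn_one_div_mul {φ : ℝ → ℝ} {s : Set ℝ} (hs : s ⊆ Ioi 0)
    (hφpos : ∀ t ∈ s, 0 < φ t) (hφ : MonotoneOn φ s) :
    AntitoneOn (fun t => 1 / (t * φ t)) s := fun x hx _ hy hxy =>
  one_div_le_one_div_of_le (mul_pos (hs hx) (hφpos x hx))
    (mul_le_mul hxy (hφ hx hy hxy) (hφpos x hx).le (le_of_lt (hs hy)))

section IntegralIci

variable {g : ℝ → ℝ} {a u v : ℝ}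

theorem AntitoneOn.mul_sub_le_integral_sub (hg : AntitoneOn g (Ici a)) (hu : a ≤ u)
    (huv : u ≤ v) : g v * (v - u) ≤ (∫ t in a..v, g t) - ∫ t in a..u, g t := by
  have hint : ∀ x y, a ≤ x → x ≤ y → IntervalIntegrable g volume x y := fun x y hx hxy =>
    (hg.mono (by rw [uIcc_of_le hxy]; exact Icc_subset_Ici_iff hxy |>.2 hx)).intervalIntegrable
  rw [intervalIntegral.integral_interval_sub_left (hint a v le_rfl (hu.trans huv))
    (hint a u le_rfl hu)]
  calc g v * (v - u) = ∫ _ in u..v, g v := by simp [mul_comm]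
    _ ≤ ∫ t in u..v, g t := intervalIntegral.integral_mono_on huv intervalIntegrable_const
        (hint u v hu huv) fun t ht => hg (hu.trans ht.1) (hu.trans huv) ht.2

theorem AntitoneOn.monotoneOn_integral (hg : AntitoneOn g (Ici a))
    (hg0 : ∀ t ∈ Ici a, 0 ≤ g t) : MonotoneOn (fun u => ∫ t in a..u, g t) (Ici a) :=
  fun _ hu v hv huv => sub_nonneg.1 <|
    (mul_nonneg (hg0 v hv) (sub_nonneg.2 huv)).trans (hg.mul_sub_le_integral_sub hu huv)

theorem intervalIntegral_le_setIntegral_Ici (hg0 : ∀ t ∈ Ici a, 0 ≤ g t)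
    (hgi : IntegrableOn g (Ici a)) (hu : a ≤ u) :
    ∫ t in a..u, g t ≤ ∫ t in Ici a, g t := by
  rw [intervalIntegral.integral_of_le hu]
  exact setIntegral_mono_set hgi (ae_restrict_of_forall_mem measurableSet_Ici hg0)
    (Ioc_subset_Icc_self.trans Icc_subset_Ici_self).eventuallyLE

theorem AntitoneOn.monotone_integral_comp_max {T : ℝ → ℝ} {γ : ℝ} (hg : AntitoneOn g (Ici a))
    (hg0 : ∀ t ∈ Ici a, 0 ≤ g t) (hT : MonotoneOn T (Ici γ)) (hTa : a ≤ T γ) :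
    Monotone fun r => ∫ t in a..T (max r γ), g t := fun x y hxy =>
  have hTa' : ∀ r, a ≤ T (max r γ) := fun r =>
    hTa.trans (hT self_mem_Ici (le_max_right r γ) (le_max_right r γ))
  hg.monotoneOn_integral hg0 (hTa' x) (hTa' y)
    (hT (le_max_right x γ) (le_max_right y γ) (max_le_max_right γ hxy))

theorem AntitoneOn.mul_deriv_le_deriv_integral_comp_max {T : ℝ → ℝ} {γ r : ℝ}
    (hg : AntitoneOn g (Ici a)) (hT : MonotoneOn T (Ici γ)) (hTa : a ≤ T γ) (hr : γ < r)
    (hTr : DifferentiableAt ℝ T r)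
    (hF : DifferentiableAt ℝ (fun r => ∫ t in a..T (max r γ), g t) r) :
    g (T r) * deriv T r ≤ deriv (fun r => ∫ t in a..T (max r γ), g t) r := by
  refine mul_deriv_le_deriv_of_eventually_le hF hTr ?_
  filter_upwards [Ioo_mem_nhdsLT hr] with s hs
  simp only [max_eq_left hs.1.le, max_eq_left hr.le]
  exact hg.mul_sub_le_integral_sub (hTa.trans (hT self_mem_Ici hs.1.le hs.1.le))
    (hT hs.1.le hr.le hs.2.le)

end IntegralIci

theorem borel_lemma_general (T φ : ℝ → ℝ) (γ : ℝ) (hγ : 0 < γ)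
    (hT1 : ContDiffOn ℝ 1 T (Set.Ioi 0))
    (hTmono : MonotoneOn T (Set.Ioi 0))
    (hTγ : Real.exp 1 ≤ T γ)
    (hφpos : ∀ t ∈ Set.Ici (Real.exp 1), 0 < φ t)
    (hφmono : MonotoneOn φ (Set.Ici (Real.exp 1)))
    (hφint : IntegrableOn (fun t => 1 / (t * φ t)) (Set.Ici (Real.exp 1))) :
    volume {r : ℝ | r ∈ Set.Ici γ ∧ T r * φ (T r) < deriv T r}
      ≤ ENNReal.ofReal (∫ t in Set.Ici (Real.exp 1), 1 / (t * φ t)) := by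
  set g : ℝ → ℝ := fun t => 1 / (t * φ t)
  set E := {r : ℝ | r ∈ Set.Ici γ ∧ T r * φ (T r) < deriv T r}
  have he : Ici (Real.exp 1) ⊆ Ioi 0 := fun t ht => (Real.exp_pos 1).trans_le ht
  have hg : AntitoneOn g (Ici (Real.exp 1)) := antitoneOn_one_div_mul he hφpos hφmono
  have hg0 : ∀ t ∈ Ici (Real.exp 1), 0 ≤ g t := fun t ht =>
    le_of_lt (one_div_pos.2 (mul_pos (he ht) (hφpos t ht)))
  have hT : MonotoneOn T (Ici γ) := hTmono.mono fun r hr => hγ.trans_le hr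
  have hTe : ∀ r, Real.exp 1 ≤ T (max r γ) := fun r =>
    hTγ.trans (hT self_mem_Ici (le_max_right r γ) (le_max_right r γ))
  set F : ℝ → ℝ := fun r => ∫ t in Real.exp 1..T (max r γ), g t
  have hF_deriv : ∀ r ∈ E ∩ Ioi γ, DifferentiableAt ℝ F r → 1 ≤ deriv F r := by
    rintro r ⟨⟨hr_ge, hr⟩, hr_gt : γ < r⟩ hFr
    have hTr_e : Real.exp 1 ≤ T r := hTγ.trans (hT self_mem_Ici hr_ge hr_ge)
    have hpos : 0 < T r * φ (T r) := mul_pos (he hTr_e) (hφpos _ hTr_e)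
    have hTr : DifferentiableAt ℝ T r :=
      (hT1.differentiableOn one_ne_zero).differentiableAt (Ioi_mem_nhds (hγ.trans hr_gt))
    calc 1 ≤ g (T r) * deriv T r := by rw [one_div_mul_eq_div, one_le_div hpos]; exact hr.le
      _ ≤ deriv F r := hg.mul_deriv_le_deriv_integral_comp_max hT hTγ hr_gt hTr hFr
  calc volume E ≤ volume (E ∩ Ioi γ) := measure_mono_ae <| by
        filter_upwards [Measure.ae_ne volume γ] with r hrγ hr
        exact ⟨hr, lt_of_le_of_ne hr.1 (Ne.symm hrγ)⟩
    _ ≤ ENNReal.ofReal ((∫ t in Ici (Real.exp 1), g t) - F γ) :=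
        (hg.monotone_integral_comp_max hg0 hT hTγ).volume_le_of_one_le_deriv_of_le
          inter_subset_right (fun r => intervalIntegral_le_setIntegral_Ici hg0 hφint (hTe r))
          hF_deriv
    _ ≤ ENNReal.ofReal (∫ t in Ici (Real.exp 1), g t) := ENNReal.ofReal_le_ofReal <|
        sub_le_self _ <| intervalIntegral.integral_nonneg (hTe γ) fun t ht => hg0 t ht.1

/-- **Borel Lemma.** Let `T` be a strictly positive nondecreasing `C¹` function on `(0,∞)`,
let `γ > 0` be such that `T γ ≥ e`, and let `φ` be strictly positive and nondecreasing on
`[e,∞)` with `c_φ = ∫_e^∞ dt/(t·φ t) < ∞`.  Then `T' r ≤ T r * φ (T r)` holds for all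
`r ≥ γ` outside a set of Lebesgue measure at most `c_φ`. -/
theorem borel_lemma (T φ : ℝ → ℝ) (γ : ℝ) (hγ : 0 < γ)
    (hT1 : ContDiffOn ℝ 1 T (Set.Ioi 0))
    (hTpos : ∀ r ∈ Set.Ioi (0:ℝ), 0 < T r)
    (hTmono : MonotoneOn T (Set.Ioi 0))
    (hTγ : Real.exp 1 ≤ T γ)
    (hφpos : ∀ t ∈ Set.Ici (Real.exp 1), 0 < φ t)
    (hφmono : MonotoneOn φ (Set.Ici (Real.exp 1)))
    (hφint : IntegrableOn (fun t => 1 / (t * φ t)) (Set.Ici (Real.exp 1))) :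
    volume {r : ℝ | r ∈ Set.Ici γ ∧ T r * φ (T r) < deriv T r}
      ≤ ENNReal.ofReal (∫ t in Set.Ici (Real.exp 1), 1 / (t * φ t)) :=
  borel_lemma_general T φ γ hγ hT1 hTmono hTγ hφpos hφmono hφint
end

section
/- Double Borel estimate (core of the Calculus Lemma): Let m ≥ 1 be an integer, δ > 0, and let G : (0,∞) → (0,∞) be a nondecreasing continuous function. Let Γ : (0,∞) → ℝ be a nondecreasing function of class C^1 such that the function S(r) := Γ'(r)·G(r)^{2m-1} is strictly positive, nondecreasing and of class C^1, and suppose there exists γ > 0 with Γ(γ) ≥ e and S(γ) ≥ e. Then the inequality d/dr( Γ'(r)·G(r)^{2m-1} ) ≤ G(r)^{2m-1} · { log Γ(r) · log( G(r)^{2m-1} · Γ(r) · (log Γ(r))^{1+δ} ) }^{1+δ} · Γ(r) holds for all r ≥ γ outside a set of finite Lebesgue measure. -/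
/-! Borel's lemma holds for every nondecreasing `f` with `f ≥ e` on `[γ, ∞)`: for
`φ t = -δ⁻¹ (log t)^(-δ)`, the composite `H = φ ∘ f` is nondecreasing with values in `[-δ⁻¹, 0]`
and `H' = f' / (f (log f)^(1+δ))` wherever `f'` exists, so by the change of variables formula for
monotone functions the set where `H' > 1` has measure at most `∫ H' ≤ δ⁻¹`.  Off the two
exceptional sets of `Γ` and of `S`, first `S ≤ G^(2m-1) Γ (log Γ)^(1+δ) =: A` and then
`S' ≤ S (log S)^(1+δ) ≤ A (log A)^(1+δ)`, which is the claimed bound. -/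

open MeasureTheory Set

theorem MonotoneOn.setLIntegral_deriv_le_volume_image {H : ℝ → ℝ} {s : Set ℝ}
    (hs : MeasurableSet s) (hH : MonotoneOn H s) :
    ∫⁻ x in s, ENNReal.ofReal (deriv H x) ≤ volume (H '' s) := by
  set t := s ∩ {x | DifferentiableAt ℝ H x}
  have hderiv_zero : ∫⁻ x in s \ {x | DifferentiableAt ℝ H x}, ENNReal.ofReal (deriv H x) = 0 :=
    setLIntegral_eq_zero (hs.diff (measurableSet_of_differentiableAt ℝ H))
      fun x hx => by simp [deriv_zero_of_not_differentiableAt hx.2]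
  calc ∫⁻ x in s, ENNReal.ofReal (deriv H x)
      = ∫⁻ x in t, ENNReal.ofReal (deriv H x) := by
        rw [← lintegral_inter_add_sdiff _ s (measurableSet_of_differentiableAt ℝ H),
          hderiv_zero, add_zero]
    _ = volume (H '' t) :=
        lintegral_deriv_eq_volume_image_of_monotoneOn
          (hs.inter (measurableSet_of_differentiableAt ℝ H))
          (fun x hx => hx.2.hasDerivAt.hasDerivWithinAt) (hH.mono inter_subset_left)
    _ ≤ volume (H '' s) := measure_mono (image_mono inter_subset_left)

noncomputable def borelPrimitive (δ t : ℝ) : ℝ := -δ⁻¹ * Real.log t ^ (-δ)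

theorem hasDerivAt_borelPrimitive {δ t : ℝ} (hδ : δ ≠ 0) (ht : 1 < t) :
    HasDerivAt (borelPrimitive δ) (t * Real.log t ^ (1 + δ))⁻¹ t := by
  have hlog : 0 < Real.log t := Real.log_pos ht
  have h := ((Real.hasDerivAt_log (by linarith)).rpow_const (p := -δ)
    (Or.inl hlog.ne')).const_mul (-δ⁻¹)
  refine h.congr_deriv ?_
  rw [show -δ - 1 = -(1 + δ) by ring, Real.rpow_neg hlog.le]
  field_simp

theorem monotoneOn_borelPrimitive {δ : ℝ} (hδ : 0 ≤ δ) :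
    MonotoneOn (borelPrimitive δ) (Ioi 1) := by
  intro a ha b _ hab
  have hlog : Real.log a ≤ Real.log b := Real.log_le_log (by linarith [mem_Ioi.1 ha]) hab
  have := Real.rpow_le_rpow_of_nonpos (Real.log_pos ha) hlog (neg_nonpos.2 hδ)
  unfold borelPrimitive
  nlinarith [inv_nonneg.2 hδ]

theorem mapsTo_borelPrimitive {δ : ℝ} (hδ : 0 ≤ δ) :
    MapsTo (borelPrimitive δ) (Ici (Real.exp 1)) (Icc (-δ⁻¹) 0) := by
  intro t ht
  have hlog : 1 ≤ Real.log t := by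
    simpa using Real.log_le_log (Real.exp_pos 1) ht
  have h0 : 0 ≤ Real.log t ^ (-δ) := Real.rpow_nonneg (by linarith) _
  have h1 : Real.log t ^ (-δ) ≤ 1 := Real.rpow_le_one_of_one_le_of_nonpos hlog (by linarith)
  constructor <;> unfold borelPrimitive <;> nlinarith [inv_nonneg.2 hδ]

theorem volume_setOf_mul_log_rpow_lt_deriv_lt_top {f : ℝ → ℝ} {γ δ : ℝ} (hδ : 0 < δ)
    (hf : MonotoneOn f (Ici γ)) (hfγ : Real.exp 1 ≤ f γ) :
    volume {r | r ∈ Ici γ ∧ f r * Real.log (f r) ^ (1 + δ) < deriv f r} < ⊤ := by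
  set E := {r | r ∈ Ici γ ∧ f r * Real.log (f r) ^ (1 + δ) < deriv f r}
  set H := borelPrimitive δ ∘ f
  have hfe : MapsTo f (Ici γ) (Ici (Real.exp 1)) := fun r hr => hfγ.trans (hf self_mem_Ici hr hr)
  have hH : MonotoneOn H (Ici γ) :=
    (monotoneOn_borelPrimitive hδ.le).comp hf
      (hfe.mono_right (Ici_subset_Ioi.2 (Real.one_lt_exp_iff.2 one_pos)))
  have hHE : ∀ r ∈ E, 1 < deriv H r := by
    rintro r ⟨hr, hlt⟩
    have hfr : 1 < f r := (Real.one_lt_exp_iff.2 one_pos).trans_le (hfe hr)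
    have hden : 0 < f r * Real.log (f r) ^ (1 + δ) :=
      mul_pos (by linarith) (Real.rpow_pos_of_pos (Real.log_pos hfr) _)
    have hdiff : DifferentiableAt ℝ f r := differentiableAt_of_deriv_ne_zero (by linarith)
    rw [((hasDerivAt_borelPrimitive hδ.ne' hfr).comp r hdiff.hasDerivAt).deriv,
      lt_inv_mul_iff₀ hden, mul_one]
    exact hlt
  calc volume E = volume.restrict (Ici γ) E := (Measure.restrict_eq_self _ fun r hr => hr.1).symm
    _ ≤ ∫⁻ x in Ici γ, ENNReal.ofReal (deriv H x) :=
        meas_le_lintegral₀ (measurable_deriv H).ennreal_ofReal.aemeasurable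
          fun r hr => ENNReal.one_le_ofReal.2 (hHE r hr).le
    _ ≤ volume (H '' Ici γ) := hH.setLIntegral_deriv_le_volume_image measurableSet_Ici
    _ ≤ volume (Icc (-δ⁻¹) 0) :=
        measure_mono (image_subset_iff.2 fun r hr => mapsTo_borelPrimitive hδ.le (hfe hr))
    _ < ⊤ := measure_Icc_lt_top

theorem le_mul_log_mul_log_rpow {δ x x' g s' : ℝ} (hδ : 0 ≤ 1 + δ) (hx : 1 ≤ x) (hg : 0 ≤ g)
    (hx'g : 1 ≤ x' * g) (hx' : x' ≤ x * Real.log x ^ (1 + δ))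
    (hs' : s' ≤ x' * g * Real.log (x' * g) ^ (1 + δ)) :
    s' ≤ g * (Real.log x * Real.log (g * x * Real.log x ^ (1 + δ))) ^ (1 + δ) * x := by
  set A := g * x * Real.log x ^ (1 + δ)
  have hA : x' * g ≤ A := by
    simpa only [A, mul_comm g, mul_assoc] using mul_le_mul_of_nonneg_right hx' hg
  have hlogA : Real.log (x' * g) ≤ Real.log A := Real.log_le_log (by linarith) hA
  have hlog : 0 ≤ Real.log (x' * g) := Real.log_nonneg hx'g
  calc s' ≤ x' * g * Real.log (x' * g) ^ (1 + δ) := hs'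
    _ ≤ A * Real.log A ^ (1 + δ) :=
        mul_le_mul hA (Real.rpow_le_rpow hlog hlogA hδ) (Real.rpow_nonneg hlog _) (by linarith)
    _ = g * (Real.log x * Real.log A) ^ (1 + δ) * x := by
        rw [Real.mul_rpow (Real.log_nonneg hx) (hlog.trans hlogA)]
        ring

theorem double_borel_estimate_general (m : ℕ) (δ : ℝ) (hδ : 0 < δ)
    (G Γ : ℝ → ℝ) (γ : ℝ) (hγ : 0 < γ)
    (hGpos : ∀ r ∈ Set.Ioi (0:ℝ), 0 < G r)
    (hΓmono : MonotoneOn Γ (Set.Ioi 0))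
    (S : ℝ → ℝ) (hSdef : S = fun r => deriv Γ r * G r ^ (2 * m - 1))
    (hSmono : MonotoneOn S (Set.Ioi 0))
    (hΓγ : Real.exp 1 ≤ Γ γ) (hSγ : Real.exp 1 ≤ S γ) :
    volume {r : ℝ | r ∈ Set.Ici γ ∧
        G r ^ (2 * m - 1) *
            (Real.log (Γ r) *
              Real.log (G r ^ (2 * m - 1) * Γ r * Real.log (Γ r) ^ (1 + δ))) ^ (1 + δ) *
          Γ r
        < deriv S r} < ⊤ := by
  have hIci : Ici γ ⊆ Ioi 0 := Ici_subset_Ioi.2 hγ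
  have hΓ := volume_setOf_mul_log_rpow_lt_deriv_lt_top hδ (hΓmono.mono hIci) hΓγ
  have hS := volume_setOf_mul_log_rpow_lt_deriv_lt_top hδ (hSmono.mono hIci) hSγ
  refine (measure_mono ?_).trans_lt (measure_union_lt_top hS hΓ)
  rintro r ⟨hr, hlt⟩
  by_contra hout
  simp only [mem_union, mem_ofPred_eq, not_or, not_and, not_lt] at hout
  have hS_eq : S r = deriv Γ r * G r ^ (2 * m - 1) := congrFun hSdef r
  have hΓr : 1 ≤ Γ r := by linarith [Real.add_one_le_exp 1, hΓmono hγ (hIci hr) hr]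
  have hSr : 1 ≤ S r := by linarith [Real.add_one_le_exp 1, hSmono hγ (hIci hr) hr]
  rw [hS_eq] at hout hSr
  exact hlt.not_ge (le_mul_log_mul_log_rpow (by linarith) hΓr
    (pow_nonneg (hGpos r (hIci hr)).le _) hSr (hout.2 hr) (hout.1 hr))

/-- **Double Borel estimate** (core of the Calculus Lemma).  Let `m ≥ 1`, `δ > 0`, and let
`G : (0,∞) → (0,∞)` be nondecreasing and continuous.  Let `Γ` be nondecreasing, strictly
positive and `C¹` such that `S r = Γ' r * G r ^ (2m-1)` is strictly positive, nondecreasing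
and `C¹`, with `Γ γ ≥ e`, `S γ ≥ e` for some `γ > 0`.  Then
`(d/dr)(Γ' r · G r ^ (2m-1)) ≤ G r ^ (2m-1) · {log Γ r · log(G r ^ (2m-1) · Γ r ·
(log Γ r)^(1+δ))}^(1+δ) · Γ r` holds for all `r ≥ γ` outside a set of finite Lebesgue
measure. -/
theorem double_borel_estimate (m : ℕ) (hm : 1 ≤ m) (δ : ℝ) (hδ : 0 < δ)
    (G Γ : ℝ → ℝ) (γ : ℝ) (hγ : 0 < γ)
    (hGcont : ContinuousOn G (Set.Ioi 0))
    (hGmono : MonotoneOn G (Set.Ioi 0))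
    (hGpos : ∀ r ∈ Set.Ioi (0:ℝ), 0 < G r)
    (hΓ1 : ContDiffOn ℝ 1 Γ (Set.Ioi 0))
    (hΓmono : MonotoneOn Γ (Set.Ioi 0))
    (hΓpos : ∀ r ∈ Set.Ioi (0:ℝ), 0 < Γ r)
    (S : ℝ → ℝ) (hSdef : S = fun r => deriv Γ r * G r ^ (2 * m - 1))
    (hSpos : ∀ r ∈ Set.Ioi (0:ℝ), 0 < S r)
    (hSmono : MonotoneOn S (Set.Ioi 0))
    (hS1 : ContDiffOn ℝ 1 S (Set.Ioi 0))
    (hΓγ : Real.exp 1 ≤ Γ γ) (hSγ : Real.exp 1 ≤ S γ) :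
    volume {r : ℝ | r ∈ Set.Ici γ ∧
        G r ^ (2 * m - 1) *
            (Real.log (Γ r) *
              Real.log (G r ^ (2 * m - 1) * Γ r * Real.log (Γ r) ^ (1 + δ))) ^ (1 + δ) *
          Γ r
        < deriv S r} < ⊤ :=
  double_borel_estimate_general m δ hδ G Γ γ hγ hGpos hΓmono S hSdef hSmono hΓγ hSγ
end

section
/- Let κ : [0,∞) → ℝ be a continuous, nonincreasing function with κ(t) ≤ 0 for all t ≥ 0, and let G : [0,∞) → ℝ be a C^2 solution of the ODE G''(t) + κ(t)·G(t) = 0 with G(0) = 0 and G'(0) = 1. Then G(r) ≤ r·exp( r·√(−κ(r)) ) for all r ≥ 0. -/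
/-!
Fix `r ≥ 0` and put `K = √(−κ r)`, so that `0 ≤ −κ ≤ K²` on `[0, r]` by monotonicity. For the
energy vector `(K G, G')` with the sup norm, the ODE gives `‖(K G, G')'‖ ≤ K ‖(K G, G')‖`, so by
Grönwall `|G'| ≤ exp (K x) ≤ exp (K r)` on `[0, r]`, and the mean value inequality from `G 0 = 0`
yields `G r ≤ r exp (r K)`.
-/

open Set Real

lemma norm_energy_deriv_le {K q y y' : ℝ} (hK : 0 ≤ K) (hq : |q| ≤ K ^ 2) :
    ‖(K * y', q * y)‖ ≤ K * ‖(K * y, y')‖ := by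
  simp only [Prod.norm_mk, norm_mul, norm_eq_abs, abs_of_nonneg hK]
  refine max_le (mul_le_mul_of_nonneg_left (le_max_right _ _) hK) ?_
  calc |q| * |y| ≤ K ^ 2 * |y| := mul_le_mul_of_nonneg_right hq (abs_nonneg y)
    _ = K * (K * |y|) := by ring
    _ ≤ K * max (K * |y|) |y'| := mul_le_mul_of_nonneg_left (le_max_left _ _) hK

theorem norm_energy_le_mul_exp {y y' q : ℝ → ℝ} {K a b : ℝ} (hK : 0 ≤ K)
    (hy : ContinuousOn y (Icc a b)) (hy' : ContinuousOn y' (Icc a b))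
    (hdy : ∀ x ∈ Ico a b, HasDerivWithinAt y (y' x) (Ici x) x)
    (hdy' : ∀ x ∈ Ico a b, HasDerivWithinAt y' (q x * y x) (Ici x) x)
    (hq : ∀ x ∈ Ico a b, |q x| ≤ K ^ 2) :
    ∀ x ∈ Icc a b, ‖(K * y x, y' x)‖ ≤ ‖(K * y a, y' a)‖ * exp (K * (x - a)) := by
  intro x hx
  have h := norm_le_gronwallBound_of_norm_deriv_right_le (f := fun t => (K * y t, y' t))
    (K := K) (ε := 0) ((hy.const_smul K).prodMk hy')
    (fun t ht => ((hdy t ht).const_mul K).prodMk (hdy' t ht)) le_rfl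
    (fun t ht => (add_zero (K * _)).symm ▸ norm_energy_deriv_le hK (hq t ht)) x hx
  rwa [gronwallBound_ε0] at h

theorem abs_sub_le_mul_exp_mul {y y' q : ℝ → ℝ} {K a b : ℝ} (hK : 0 ≤ K)
    (hy : ContinuousOn y (Icc a b)) (hy' : ContinuousOn y' (Icc a b))
    (hdy : ∀ x ∈ Ico a b, HasDerivWithinAt y (y' x) (Ici x) x)
    (hdy' : ∀ x ∈ Ico a b, HasDerivWithinAt y' (q x * y x) (Ici x) x)
    (hq : ∀ x ∈ Ico a b, |q x| ≤ K ^ 2) :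
    ∀ x ∈ Icc a b, |y x - y a| ≤ ‖(K * y a, y' a)‖ * exp (K * (b - a)) * (x - a) := by
  refine norm_image_sub_le_of_norm_deriv_right_le_segment hy hdy fun x hx => ?_
  calc ‖y' x‖ ≤ ‖(K * y x, y' x)‖ := norm_snd_le (K * y x, y' x)
    _ ≤ ‖(K * y a, y' a)‖ * exp (K * (x - a)) :=
      norm_energy_le_mul_exp hK hy hy' hdy hdy' hq x (Ico_subset_Icc_self hx)
    _ ≤ ‖(K * y a, y' a)‖ * exp (K * (b - a)) := by gcongr; exact hx.2.le

theorem ode_comparison_upper_general (κ G : ℝ → ℝ)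
    (hκanti : AntitoneOn κ (Set.Ici 0))
    (hκ : ∀ t ∈ Set.Ici (0:ℝ), κ t ≤ 0)
    (hG : ContDiffOn ℝ 2 G (Set.Ici 0))
    (hode : ∀ t ∈ Set.Ici (0:ℝ),
      derivWithin (derivWithin G (Set.Ici 0)) (Set.Ici 0) t = -(κ t) * G t)
    (hG0 : G 0 = 0)
    (hG'0 : derivWithin G (Set.Ici 0) 0 = 1) :
    ∀ r ∈ Set.Ici (0:ℝ), G r ≤ r * Real.exp (r * Real.sqrt (-κ r)) := by
  intro r hr
  set K := √(-κ r)
  set G' := derivWithin G (Ici 0)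
  have hGdiff : DifferentiableOn ℝ G (Ici 0) := hG.differentiableOn two_ne_zero
  have hG'diff : DifferentiableOn ℝ G' (Ici 0) :=
    (hG.derivWithin (uniqueDiffOn_Ici 0) le_rfl).differentiableOn one_ne_zero
  have hdG : ∀ x ∈ Ico 0 r, HasDerivWithinAt G (G' x) (Ici x) x := fun x hx =>
    (hGdiff x hx.1).hasDerivWithinAt.mono (Ici_subset_Ici.2 hx.1)
  have hdG' : ∀ x ∈ Ico 0 r, HasDerivWithinAt G' (-κ x * G x) (Ici x) x := fun x hx =>
    hode x hx.1 ▸ (hG'diff x hx.1).hasDerivWithinAt.mono (Ici_subset_Ici.2 hx.1)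
  have hκle : ∀ x ∈ Ico 0 r, |-κ x| ≤ K ^ 2 := fun x hx => by
    rw [sq_sqrt (neg_nonneg.2 (hκ r hr)), abs_of_nonneg (neg_nonneg.2 (hκ x hx.1))]
    exact neg_le_neg (hκanti hx.1 hr hx.2.le)
  have h := abs_sub_le_mul_exp_mul (sqrt_nonneg _) (hGdiff.continuousOn.mono Icc_subset_Ici_self)
    (hG'diff.continuousOn.mono Icc_subset_Ici_self) hdG hdG' hκle r (right_mem_Icc.2 hr)
  simp only [hG0, hG'0, G', sub_zero, mul_zero, Prod.norm_mk, norm_zero, norm_one,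
    max_eq_right zero_le_one, one_mul] at h
  calc G r ≤ |G r| := le_abs_self _
    _ ≤ exp (K * r) * r := h
    _ = r * exp (r * K) := by rw [mul_comm, mul_comm K]

/-- Let `κ : [0,∞) → ℝ` be continuous, nonincreasing and nonpositive, and let `G` be a
`C²` solution of `G'' + κ·G = 0` on `[0,∞)` with `G 0 = 0` and `G' 0 = 1`.  Then
`G r ≤ r · exp(r · √(−κ r))` for all `r ≥ 0`. -/
theorem ode_comparison_upper (κ G : ℝ → ℝ)
    (hκc : ContinuousOn κ (Set.Ici 0))
    (hκanti : AntitoneOn κ (Set.Ici 0))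
    (hκ : ∀ t ∈ Set.Ici (0:ℝ), κ t ≤ 0)
    (hG : ContDiffOn ℝ 2 G (Set.Ici 0))
    (hode : ∀ t ∈ Set.Ici (0:ℝ),
      derivWithin (derivWithin G (Set.Ici 0)) (Set.Ici 0) t = -(κ t) * G t)
    (hG0 : G 0 = 0)
    (hG'0 : derivWithin G (Set.Ici 0) 0 = 1) :
    ∀ r ∈ Set.Ici (0:ℝ), G r ≤ r * Real.exp (r * Real.sqrt (-κ r)) :=
  ode_comparison_upper_general κ G hκanti hκ hG hode hG0 hG'0
end
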